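/- Let R be a simple right Goldie ring. Then the following are equivalent: (1) R is a right Σ-V ring; (2) every singular simple right R-module is Σ-injective; (3) R is a right V-ring and R is q.f.d. relative to every singular simple right R-module. -/

import Mathlib

universe u

open MulOpposite

/-- A right `A`-module `M` is Σ-injective if the direct sum of any family of copies of `M`
is injective. -/
def IsSigmaInjective (A : Type u) [Ring A] (M : Type u) [AddCommGroup M] [Module A M] : Prop :=
  ∀ ι : Type u, Module.Injective A (ι →₀ M)

/-- `R` is a right Σ-V ring: every simple right `R`-module is Σ-injective.
Right `R`-modules are modules over `Rᵐᵒᵖ`. -/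
def IsRightSigmaVRing (R : Type u) [Ring R] : Prop :=
  ∀ (S : Type u) [AddCommGroup S] [Module Rᵐᵒᵖ S],
    IsSimpleModule Rᵐᵒᵖ S → IsSigmaInjective Rᵐᵒᵖ S

/-- `R` is a right V-ring: every simple right `R`-module is injective. -/
def IsRightVRing (R : Type u) [Ring R] : Prop :=
  ∀ (S : Type u) [AddCommGroup S] [Module Rᵐᵒᵖ S],
    IsSimpleModule Rᵐᵒᵖ S → Module.Injective Rᵐᵒᵖ S

/-- `A` is q.f.d. relative to `M`: no cyclic `A`-module contains an infinite direct sum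
(i.e., an infinite independent family) of nonzero submodules each isomorphic to a
submodule of `M`. -/
def QfdRelativeTo (A : Type u) [Ring A] (M : Type u) [AddCommGroup M] [Module A M] : Prop :=
  ∀ (C : Type u) [AddCommGroup C] [Module A C], (⊤ : Submodule A C).IsPrincipal →
    ∀ N : ℕ → Submodule A C, iSupIndep N → (∀ i, N i ≠ ⊥) →
      (∀ i, ∃ K : Submodule A M, Nonempty ((N i) ≃ₗ[A] K)) → False

/-- A right `R`-module `M` is singular if every element of `M` is annihilated by an
essential right ideal of `R`. -/
def IsSingularModule (R : Type u) [Ring R] (M : Type u) [AddCommGroup M]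
    [Module Rᵐᵒᵖ M] : Prop :=
  ∀ m : M, ∃ I : Submodule Rᵐᵒᵖ R,
    (∀ J : Submodule Rᵐᵒᵖ R, J ≠ ⊥ → I ⊓ J ≠ ⊥) ∧ ∀ r ∈ I, (op r) • m = 0

/-- `R` is a right Goldie ring: the right `R`-module `R` has finite uniform dimension
and `R` satisfies the ascending chain condition on right annihilators. -/
def IsRightGoldieRing (R : Type u) [Ring R] : Prop :=
  (¬ ∃ N : ℕ → Submodule Rᵐᵒᵖ R, iSupIndep N ∧ ∀ i, N i ≠ ⊥) ∧
    ∀ f : ℕ → Set R, Monotone f →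
      (∀ n, ∃ T : Set R, f n = {r : R | ∀ s ∈ T, s * r = 0}) →
      ∃ n, ∀ m, n ≤ m → f m = f n

/-!
A simple ring either has a minimal right ideal, and is then semisimple Artinian, so that every
module is injective, or it has none, and then every simple right module `S` is singular: if the
annihilator of `m ∈ S` missed a nonzero right ideal `J`, then `r ↦ m r` would embed `J` into `S`,
making `J` simple. So everything reduces to a simple injective module `S`, for which
Σ-injectivity is equivalent to being q.f.d. relative to `S`.

Σ-injective ⇒ q.f.d.: extend the embedding of an infinite direct sum `⊕ Nᵢ ⊆ C` into `S^(ℕ)`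
to the cyclic module `C`; the image of a generator of `C` has finite support, contradicting
that every `Nᵢ` lands in its own coordinate.

q.f.d. ⇒ Σ-injective (Baer's criterion): extend `f : I → S^(ι)` coordinatewise to
`G : A → S^ι`. The finitely supported part of the cyclic module `G A` is semisimple, and by
q.f.d. it is a finite sum of simple modules, hence lies in `S^(s)` for a finite `s`. As `S^(s)`
is injective, `f` extends into it.
-/

section General

variable {A : Type u} [Ring A] {M N : Type u} [AddCommGroup M] [Module A M]
  [AddCommGroup N] [Module A N]

theorem Module.Injective.of_linearEquiv [Module.Injective A M] (e : M ≃ₗ[A] N) :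
    Module.Injective A N :=
  ((Module.Baer.of_injective ‹_›).of_equiv e).injective

theorem IsSigmaInjective.injective (h : IsSigmaInjective A M) : Module.Injective A M :=
  have := h PUnit.{u + 1}
  .of_linearEquiv (Finsupp.uniqueLinearEquiv A M PUnit.unit)

theorem iSupIndep.map_of_injective {ι : Type*} {p : ι → Submodule A M} (hp : iSupIndep p)
    {f : M →ₗ[A] N} (hf : Function.Injective f) : iSupIndep fun i => (p i).map f := by
  intro i
  simp only [disjoint_iff, ← Submodule.map_iSup, ← Submodule.map_inf f hf, (hp i).eq_bot,
    Submodule.map_bot]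

theorem LinearMap.isPrincipal_top_range (g : A →ₗ[A] N) :
    (⊤ : Submodule A (LinearMap.range g)).IsPrincipal := by
  rw [← LinearMap.range_rangeRestrict, LinearMap.range_eq_map g.rangeRestrict]
  exact top_isPrincipal.map _

theorem Finsupp.exists_finite_le_supported {ι : Type*} {V : Submodule A (ι →₀ M)} (hV : V.FG) :
    ∃ s : Set ι, s.Finite ∧ V ≤ Finsupp.supported M A s := by
  obtain ⟨T, rfl⟩ := hV
  refine ⟨⋃ t ∈ T, ↑t.support, T.finite_toSet.biUnion fun t _ => t.support.finite_toSet,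
    Submodule.span_le.2 fun t ht => ?_⟩
  exact Finsupp.supported_mono (Set.subset_biUnion_of_mem (u := fun t => (t.support : Set ι)) ht)
    (Finsupp.mem_supported_support A t)

theorem Finsupp.moduleInjective_supported [Module.Injective A M] {ι : Type u} {s : Set ι}
    (hs : s.Finite) : Module.Injective A (Finsupp.supported M A s) :=
  have := hs.to_subtype
  .of_linearEquiv ((Finsupp.supportedEquivFinsupp s).trans
    (Finsupp.linearEquivFunOnFinite A M s)).symm

theorem IsSimpleModule.exists_linearEquiv_submodule_of_ne_zero [IsSimpleModule A N] {ι : Type*}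
    {f : N →ₗ[A] ι →₀ M} (hf : f ≠ 0) : ∃ K : Submodule A M, Nonempty (N ≃ₗ[A] K) := by
  obtain ⟨x, hx⟩ : ∃ x, f x ≠ 0 := by
    by_contra! h
    exact hf (LinearMap.ext h)
  obtain ⟨i, hi⟩ : ∃ i, f x i ≠ 0 := by
    by_contra! h
    exact hx (Finsupp.ext h)
  have hfi : Finsupp.lapply i ∘ₗ f ≠ 0 := fun h => hi (LinearMap.congr_fun h x)
  exact ⟨_, ⟨.ofInjective _ (LinearMap.injective_of_ne_zero hfi)⟩⟩

theorem QfdRelativeTo.moduleFinite_of_injective {C V : Type u} [AddCommGroup C] [Module A C]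
    [AddCommGroup V] [Module A V] [IsSemisimpleModule A V] (hq : QfdRelativeTo A M)
    (hC : (⊤ : Submodule A C).IsPrincipal) {ι : Type*} {e : V →ₗ[A] ι →₀ M}
    (he : Function.Injective e) {j : V →ₗ[A] C} (hj : Function.Injective j) :
    Module.Finite A V := by
  obtain ⟨s, hind, htop, hsimple⟩ := IsSemisimpleModule.exists_sSupIndep_sSup_simples_eq_top A V
  refine ((IsSemisimpleModule.finite_tfae (R := A) (M := V)).out 0 4).2 ?_
  refine ⟨s, ?_, hind, htop, hsimple⟩
  by_contra hinf
  let emb : ℕ ↪ s := Set.Infinite.natEmbedding s hinf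
  let X : ℕ → Submodule A V := fun n => emb n
  have hX : ∀ n, IsSimpleModule A (X n) := fun n => hsimple _ (emb n).2
  refine hq C hC (fun n => (X n).map j)
    ((((sSupIndep_iff s).1 hind).comp emb.injective).map_of_injective hj)
    (fun n => ?_) (fun n => ?_)
  · rw [Ne, ← Submodule.map_bot j, (Submodule.map_injective_of_injective hj).eq_iff]
    exact (isSimpleModule_iff_isAtom.1 (hX n)).1
  · have hne : e ∘ₗ (X n).subtype ≠ 0 := by
      have := IsSimpleModule.nontrivial A (X n)
      obtain ⟨x, hx⟩ := exists_ne (0 : X n)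
      exact fun h => hx (Subtype.ext (he (by simpa using LinearMap.congr_fun h x)))
    obtain ⟨K, ⟨eK⟩⟩ := IsSimpleModule.exists_linearEquiv_submodule_of_ne_zero hne
    exact ⟨K, ⟨(Submodule.equivMapOfInjective j hj _).symm.trans eK⟩⟩

theorem IsSigmaInjective.qfdRelativeTo (h : IsSigmaInjective A M) : QfdRelativeTo A M := by
  intro C _ _ hC N hind hne hiso
  choose K hK using hiso
  let eK : ∀ n, N n ≃ₗ[A] K n := fun n => (hK n).some
  have := h (ULift ℕ)
  obtain ⟨g, hg⟩ := Module.Injective.extension_property A (ULift ℕ →₀ M) _ C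
    (DFinsupp.lsum ℕ fun n => (N n).subtype) hind.dfinsupp_lsum_injective
    (DFinsupp.lsum ℕ fun n => Finsupp.lsingle (ULift.up n) ∘ₗ (K n).subtype ∘ₗ (eK n).toLinearMap)
  obtain ⟨c, hc⟩ := hC.principal
  obtain ⟨⟨n⟩, hn⟩ := Infinite.exists_notMem_finset (g c).support
  obtain ⟨x, hxN, hx0⟩ := (Submodule.ne_bot_iff _).1 (hne n)
  have hgx : g x = Finsupp.single ⟨n⟩ (eK n ⟨x, hxN⟩ : M) := by
    simpa using LinearMap.congr_fun hg (DFinsupp.single n ⟨x, hxN⟩)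
  obtain ⟨a, rfl⟩ :=
    Submodule.mem_span_singleton.1 (hc ▸ Submodule.mem_top : x ∈ Submodule.span A {c})
  have hgx_n : g (a • c) ⟨n⟩ = 0 := by
    rw [map_smul, Finsupp.smul_apply, Finsupp.notMem_support_iff.1 hn, smul_zero]
  rw [hgx, Finsupp.single_eq_same] at hgx_n
  exact hx0 (by simpa using hgx_n)

theorem IsSigmaInjective.of_qfdRelativeTo [IsSimpleModule A M] [Module.Injective A M]
    (hq : QfdRelativeTo A M) : IsSigmaInjective A M := by
  intro ι
  refine Module.Baer.injective fun I f => ?_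
  choose H hH using fun i => Module.Injective.extension_property A M I A I.subtype
    I.injective_subtype (Finsupp.lapply i ∘ₗ f)
  let G : A →ₗ[A] ι → M := LinearMap.pi H
  let V : Submodule A (ι →₀ M) := (LinearMap.range G).comap Finsupp.lcoeFun
  have hfV : ∀ x, f x ∈ V := fun x => ⟨x, funext fun i => LinearMap.congr_fun (hH i) x⟩
  have hV : V.FG := by
    let j : V →ₗ[A] LinearMap.range G :=
      (Finsupp.lcoeFun ∘ₗ V.subtype).codRestrict _ fun v => v.2
    have hj : Function.Injective j := fun v w hvw =>
      Subtype.ext (DFunLike.coe_injective congr(Subtype.val $hvw))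
    exact Module.Finite.iff_fg.1
      (hq.moduleFinite_of_injective G.isPrincipal_top_range V.injective_subtype hj)
  obtain ⟨s, hs, hVs⟩ := Finsupp.exists_finite_le_supported hV
  have := Finsupp.moduleInjective_supported (M := M) (A := A) hs
  obtain ⟨g, hg⟩ := Module.Injective.extension_property A _ I A I.subtype I.injective_subtype
    (f.codRestrict _ fun x => hVs (hfV x))
  exact ⟨(Finsupp.supported M A s).subtype ∘ₗ g,
    fun x hx => congr(Subtype.val $(LinearMap.congr_fun hg ⟨x, hx⟩))⟩

end General

section RightModules

variable {R : Type u} [Ring R]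

theorem isSemisimpleRing_mulOpposite_of_isSimpleModule [IsSimpleRing R]
    (J : Submodule Rᵐᵒᵖ R) [IsSimpleModule Rᵐᵒᵖ J] : IsSemisimpleRing Rᵐᵒᵖ := by
  refine ((IsSimpleRing.tfae (R := Rᵐᵒᵖ)).out 0 2).2 ?_
  let e : R ≃ₗ[Rᵐᵒᵖ] Rᵐᵒᵖ := opLinearEquiv Rᵐᵒᵖ
  have : IsSimpleModule Rᵐᵒᵖ (J.map (e : R →ₗ[Rᵐᵒᵖ] Rᵐᵒᵖ)) :=
    .congr (J.equivMapOfInjective _ e.injective).symm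
  exact ⟨_, isSimpleModule_iff_isAtom.1 this⟩

theorem IsSimpleModule.of_injective {N S : Type u} [AddCommGroup N] [Module R N] [Nontrivial N]
    [AddCommGroup S] [Module R S] [IsSimpleModule R S] {f : N →ₗ[R] S}
    (hf : Function.Injective f) : IsSimpleModule R N := by
  have hf0 : f ≠ 0 := by
    obtain ⟨x, hx⟩ := exists_ne (0 : N)
    exact fun h => hx (hf (by simp [h]))
  exact .congr (.ofBijective f ⟨hf, LinearMap.surjective_of_ne_zero hf0⟩)

theorem isSingularModule_of_forall_not_isSimpleModule
    (h : ∀ J : Submodule Rᵐᵒᵖ R, ¬IsSimpleModule Rᵐᵒᵖ J) (S : Type u) [AddCommGroup S]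
    [Module Rᵐᵒᵖ S] [IsSimpleModule Rᵐᵒᵖ S] : IsSingularModule R S := by
  intro m
  let φ : R →ₗ[Rᵐᵒᵖ] S := LinearMap.toSpanSingleton Rᵐᵒᵖ S m ∘ₗ (opLinearEquiv Rᵐᵒᵖ).toLinearMap
  refine ⟨LinearMap.ker φ, fun J hJ hdisj => h J ?_, fun r hr => hr⟩
  have : Nontrivial J := Submodule.nontrivial_iff_ne_bot.2 hJ
  refine IsSimpleModule.of_injective (f := φ ∘ₗ J.subtype)
    ((injective_iff_map_eq_zero _).2 fun x hx => ?_)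
  have hx' : (x : R) ∈ LinearMap.ker φ ⊓ J := ⟨hx, x.2⟩
  rw [hdisj, Submodule.mem_bot] at hx'
  exact Subtype.ext hx'

theorem IsSimpleRing.isSemisimpleRing_mulOpposite_or_isSingularModule [IsSimpleRing R] :
    IsSemisimpleRing Rᵐᵒᵖ ∨ ∀ (S : Type u) [AddCommGroup S] [Module Rᵐᵒᵖ S],
      IsSimpleModule Rᵐᵒᵖ S → IsSingularModule R S := by
  by_cases h : ∃ J : Submodule Rᵐᵒᵖ R, IsSimpleModule Rᵐᵒᵖ J
  · obtain ⟨J, hJ⟩ := h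
    exact .inl (isSemisimpleRing_mulOpposite_of_isSimpleModule J)
  · exact .inr fun S _ _ _ => isSingularModule_of_forall_not_isSimpleModule (not_exists.1 h) S

end RightModules

theorem simple_rightGoldie_rightSigmaV_tfae_general (R : Type u) [Ring R]
    (hsimple : IsSimpleRing R) :
    List.TFAE
      [IsRightSigmaVRing R,
       ∀ (S : Type u) [AddCommGroup S] [Module Rᵐᵒᵖ S],
         IsSimpleModule Rᵐᵒᵖ S → IsSingularModule R S → IsSigmaInjective Rᵐᵒᵖ S,
       IsRightVRing R ∧
         ∀ (S : Type u) [AddCommGroup S] [Module Rᵐᵒᵖ S],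
           IsSimpleModule Rᵐᵒᵖ S → IsSingularModule R S → QfdRelativeTo Rᵐᵒᵖ S] := by
  have hcases := hsimple.isSemisimpleRing_mulOpposite_or_isSingularModule
  tfae_have 1 → 2 := fun h S _ _ hS _ => h S hS
  tfae_have 2 → 3 := fun h =>
    ⟨fun S _ _ hS => hcases.elim (fun _ => Module.injective_of_isSemisimpleRing _ _)
      fun hsing => (h S hS (hsing S hS)).injective,
    fun S _ _ hS hsing => (h S hS hsing).qfdRelativeTo⟩
  tfae_have 3 → 1 := fun ⟨hV, hq⟩ S _ _ hS => by
    refine hcases.elim (fun _ ι => Module.injective_of_isSemisimpleRing _ _) fun hsing => ?_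
    have := hV S hS
    exact .of_qfdRelativeTo (hq S hS (hsing S hS))
  tfae_finish

/-- For a simple right Goldie ring `R` the following are equivalent:
(1) `R` is a right Σ-V ring;
(2) every singular simple right `R`-module is Σ-injective;
(3) `R` is a right V-ring and `R` is q.f.d. relative to every singular simple
    right `R`-module. -/
theorem simple_rightGoldie_rightSigmaV_tfae (R : Type u) [Ring R]
    (hsimple : IsSimpleRing R) (hgoldie : IsRightGoldieRing R) :
    List.TFAE
      [IsRightSigmaVRing R,
       ∀ (S : Type u) [AddCommGroup S] [Module Rᵐᵒᵖ S],
         IsSimpleModule Rᵐᵒᵖ S → IsSingularModule R S → IsSigmaInjective Rᵐᵒᵖ S,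
       IsRightVRing R ∧
         ∀ (S : Type u) [AddCommGroup S] [Module Rᵐᵒᵖ S],
           IsSimpleModule Rᵐᵒᵖ S → IsSingularModule R S → QfdRelativeTo Rᵐᵒᵖ S] :=
  simple_rightGoldie_rightSigmaV_tfae_general R hsimple
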